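/- Let a > 0, b ≥ 0, u₀ ∈ ℝ, and let c₀ be the unique positive root of x(a x² + 2b) = 4. Let u be an axisymmetric stationary rotating profile on [0, c₀) with u(0) = u₀, i.e. u is differentiable on [0, c₀) and u'(r)/√(1 + u'(r)²) = r(a r² + 2b)/4 for all r ∈ [0, c₀). Then u(r) − u₀ < c₀ − √(c₀² − r²) for all r with 0 < r < c₀. -/

import Mathlib

open Set

/-!
Compare `u` with the lower hemisphere `w r = c₀ - √(c₀² - r²)` of radius `c₀`, for which
`w' / √(1 + w'²) = r / c₀`. Since `c₀ (a c₀² + 2b) = 4` and `a > 0`, the prescribed value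
`r (a r² + 2b) / 4` is strictly smaller than `r / c₀` on `(0, c₀)`; as `t ↦ t / √(1 + t²)` is
strictly increasing, `u' < w'` there, and `u - u₀` and `w` both vanish at `0`.
-/

theorem strictMono_div_sqrt_one_add_sq : StrictMono fun t : ℝ => t / √(1 + t ^ 2) := by
  refine strictMono_of_hasDerivAt_pos (f' := fun t => 1 / ((1 + t ^ 2) * √(1 + t ^ 2)))
    (fun t => ?_) fun t => by positivity
  have hpos : 0 < 1 + t ^ 2 := by positivity
  have hs := Real.sqrt_pos.2 hpos
  refine ((hasDerivAt_id' t).fun_div (((hasDerivAt_pow 2 t).const_add 1).sqrt hpos.ne')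
    hs.ne').congr_deriv ?_
  field_simp
  rw [Real.sq_sqrt hpos.le]
  ring

theorem hasDerivAt_sub_sqrt_sq_sub_sq {c x : ℝ} (hx : x ^ 2 < c ^ 2) :
    HasDerivAt (fun y => c - √(c ^ 2 - y ^ 2)) (x / √(c ^ 2 - x ^ 2)) x := by
  have hpos : 0 < c ^ 2 - x ^ 2 := sub_pos.2 hx
  refine ((((hasDerivAt_pow 2 x).const_sub (c ^ 2)).sqrt hpos.ne').const_sub c).congr_deriv ?_
  field_simp
  ring

theorem sphere_slope_div_sqrt_one_add_sq {c x : ℝ} (hc : 0 < c) (hx : x ^ 2 < c ^ 2) :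
    x / √(c ^ 2 - x ^ 2) / √(1 + (x / √(c ^ 2 - x ^ 2)) ^ 2) = x / c := by
  have hpos : 0 < c ^ 2 - x ^ 2 := sub_pos.2 hx
  have hs := Real.sqrt_pos.2 hpos
  have hone : 1 + (x / √(c ^ 2 - x ^ 2)) ^ 2 = (c / √(c ^ 2 - x ^ 2)) ^ 2 := by
    field_simp
    rw [Real.sq_sqrt hpos.le]
    ring
  rw [hone, Real.sqrt_sq (by positivity), div_div_div_cancel_right₀ hs.ne']

theorem lt_of_hasDerivAt_lt {f g f' g' : ℝ → ℝ} {a b : ℝ} (hab : a < b)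
    (hf : ∀ x ∈ Icc a b, HasDerivAt f (f' x) x) (hg : ∀ x ∈ Icc a b, HasDerivAt g (g' x) x)
    (hlt : ∀ x ∈ Ioo a b, f' x < g' x) (hle : f a ≤ g a) : f b < g b := by
  have hd : ∀ x ∈ Icc a b, HasDerivAt (g - f) (g' x - f' x) x :=
    fun x hx => (hg x hx).sub (hf x hx)
  have hmono : StrictMonoOn (g - f) (Icc a b) := by
    refine strictMonoOn_of_hasDerivWithinAt_pos (f' := g' - f') (convex_Icc a b)
      (fun x hx => (hd x hx).continuousAt.continuousWithinAt) (fun x hx => ?_) (fun x hx => ?_)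
    · rw [interior_Icc] at hx ⊢
      exact (hd x (Ioo_subset_Icc_self hx)).hasDerivWithinAt
    · rw [interior_Icc] at hx
      exact sub_pos.2 (hlt x hx)
  have := hmono (left_mem_Icc.2 hab.le) (right_mem_Icc.2 hab.le) hab
  simp only [Pi.sub_apply] at this
  linarith

theorem stmt_4_general (a b u₀ c₀ : ℝ) (ha : 0 < a)
    (hroot : c₀ * (a * c₀ ^ 2 + 2 * b) = 4)
    (u u' : ℝ → ℝ)
    (hu : ∀ r ∈ Ico (0:ℝ) c₀, HasDerivAt u (u' r) r)
    (heq : ∀ r ∈ Ico (0:ℝ) c₀, u' r / Real.sqrt (1 + u' r ^ 2) = r * (a * r ^ 2 + 2 * b) / 4)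
    (h0 : u 0 = u₀) :
    ∀ r, 0 < r → r < c₀ → u r - u₀ < c₀ - Real.sqrt (c₀ ^ 2 - r ^ 2) := by
  intro r hr hrc
  have hc₀ : 0 < c₀ := hr.trans hrc
  have hsq {x : ℝ} (hx : x ∈ Icc 0 r) : x ^ 2 < c₀ ^ 2 := by nlinarith [hx.1, hx.2]
  have hIco {x : ℝ} (hx : x ∈ Icc 0 r) : x ∈ Ico 0 c₀ := ⟨hx.1, hx.2.trans_lt hrc⟩
  refine lt_of_hasDerivAt_lt hr (fun x hx => (hu x (hIco hx)).sub_const u₀)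
    (fun x hx => hasDerivAt_sub_sqrt_sq_sub_sq (hsq hx)) (fun x hx => ?_) (by simp [h0, hc₀.le])
  have hx' := Ioo_subset_Icc_self hx
  have hslope : x * (a * x ^ 2 + 2 * b) / 4 < x / c₀ := by
    rw [div_lt_div_iff₀ four_pos hc₀]
    nlinarith [mul_pos hx.1 (mul_pos ha (sub_pos.2 (hsq hx'))), hx.1]
  refine strictMono_div_sqrt_one_add_sq.lt_iff_lt.1 ?_
  rw [heq x (hIco hx'), sphere_slope_div_sqrt_one_add_sq hc₀ (hsq hx')]
  exact hslope

/-- Corollary: a profile of type I defined on the maximal interval `[0, c₀)` satisfies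
`u(r) - u₀ < c₀ - √(c₀² - r²)` for `0 < r < c₀`, where `c₀` is the unique positive
root of `x(ax² + 2b) = 4`. -/
theorem stmt_4 (a b u₀ c₀ : ℝ) (ha : 0 < a) (hb : 0 ≤ b)
    (hc₀ : 0 < c₀) (hroot : c₀ * (a * c₀ ^ 2 + 2 * b) = 4)
    (u u' : ℝ → ℝ)
    (hu : ∀ r ∈ Ico (0:ℝ) c₀, HasDerivAt u (u' r) r)
    (heq : ∀ r ∈ Ico (0:ℝ) c₀, u' r / Real.sqrt (1 + u' r ^ 2) = r * (a * r ^ 2 + 2 * b) / 4)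
    (h0 : u 0 = u₀) :
    ∀ r, 0 < r → r < c₀ → u r - u₀ < c₀ - Real.sqrt (c₀ ^ 2 - r ^ 2) :=
  stmt_4_general a b u₀ c₀ ha hroot u u' hu heq h0
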